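/- arXiv:1309.4291 — 3 statements merged into one kernel-verified Lean document; each statement's English description precedes it below -/
import Mathlib

section
/- Consider a finite MDP on S = {0, 1, …, M} that is skip-free in the negative direction (p_{ij}(a) = 0 for all j < i − 1 and a ∈ A) and satisfies: for each i ∈ {1, …, M} there is at least one a ∈ A with p_{i,i−1}(a) > 0. Define N_0 = 0 and N_{m+1} = max{ j : p_{ij}(a) > 0 for some 0 ≤ i ≤ N_m and some a ∈ A }. Then the sequence (N_m) is nondecreasing and eventually constant, with limit N; and the following are equivalent: (i) the MDP is communicating; (ii) M is reachable from 0 under some stationary deterministic policy; (iii) N = M. -/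
open Finset Filter

noncomputable section

/-- A rooted tree structure on a state space `S`: a root, a parent map fixing the root,
such that iterating the parent map from any state reaches the root. -/
structure SFTree (S : Type*) where
  root : S
  parent : S → S
  parent_root : parent root = root
  reaches_root : ∀ i : S, ∃ n : ℕ, parent^[n] i = root

namespace SFTree

variable {S : Type*} [Fintype S] [DecidableEq S]

open Classical in
/-- The set of descendants of `i`: states `j ≠ i` whose path to the root passes through `i`. -/
def desc (T : SFTree S) (i : S) : Finset S :=
  Finset.univ.filter fun j => j ≠ i ∧ ∃ n : ℕ, T.parent^[n] j = i

open Classical in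
/-- The subtree rooted at `i`: `i` together with its descendants. -/
def subtree (T : SFTree S) (i : S) : Finset S :=
  Finset.univ.filter fun j => ∃ n : ℕ, T.parent^[n] j = i

open Classical in
/-- The states strictly after `i` on the path from `i` to `j`. -/
def delta (T : SFTree S) (i j : S) : Finset S :=
  Finset.univ.filter fun r =>
    r ≠ i ∧ (∃ n : ℕ, T.parent^[n] j = r) ∧ (∃ m : ℕ, T.parent^[m] r = i)

end SFTree

/-- A finite Markov decision process: costs and transition probabilities. -/
structure MDP (S A : Type*) [Fintype S] where
  c : S → A → ℝ
  p : S → A → S → ℝ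
  p_nonneg : ∀ i a j, 0 ≤ p i a j
  p_sum_one : ∀ i a, ∑ j, p i a j = 1

namespace MDP

variable {S A : Type*} [Fintype S] [DecidableEq S]

/-- Tail probability: the probability of jumping from `i` into the subtree rooted at `k`. -/
def ptail (M : MDP S A) (T : SFTree S) (i : S) (a : A) (k : S) : ℝ :=
  ∑ s ∈ T.subtree k, M.p i a s

/-- Skip-free in the negative direction on the tree `T`: from `i ≠ root` the only possible
transitions are to the parent of `i` or into the subtree rooted at `i`. -/
def IsSkipFree (M : MDP S A) (T : SFTree S) : Prop :=
  ∀ i, i ≠ T.root → ∀ a j, M.p i a j ≠ 0 → j = T.parent i ∨ j ∈ T.subtree i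

/-- Transition matrix of the stationary deterministic policy `d`. -/
def Pmat (M : MDP S A) (d : S → A) : Matrix S S ℝ :=
  Matrix.of fun i j => M.p i (d i) j

/-- Cost vector of the stationary deterministic policy `d`. -/
def cvec (M : MDP S A) (d : S → A) : S → ℝ := fun i => M.c i (d i)

/-- Expected average cost of the stationary deterministic policy `d` starting from `i`. -/
def avgCost (M : MDP S A) (d : S → A) (i : S) : ℝ :=
  Filter.limsup
    (fun n : ℕ => (n : ℝ)⁻¹ * ∑ t ∈ Finset.range n, ((M.Pmat d ^ t).mulVec (M.cvec d)) i)
    Filter.atTop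

end MDP

/-- A (substochastic) matrix is irreducible if every state can reach every other state
in a positive number of steps. -/
def MatIrreducible {S : Type*} [Fintype S] [DecidableEq S] (P : Matrix S S ℝ) : Prop :=
  ∀ i j, ∃ n : ℕ, 0 < n ∧ 0 < (P ^ n) i j

/-- A recurrent model: every stationary deterministic policy has an irreducible
transition matrix. -/
def IsRecurrentModel {S A : Type*} [Fintype S] [DecidableEq S] (M : MDP S A) : Prop :=
  ∀ d : S → A, MatIrreducible (M.Pmat d)

/-- The probability weight of a path of length `n`. -/
def pathWt {S : Type*} [Fintype S] (P : Matrix S S ℝ) {n : ℕ} (x : Fin (n + 1) → S) : ℝ :=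
  ∏ t : Fin n, P (x t.castSucc) (x t.succ)

open Classical in
/-- `E[f(X_n); τ > n]` for the chain with matrix `P` started at `z`, where `τ` is the
first-return epoch to `z` (the first time the chain enters `z` from a state `≠ z`). -/
def retTerm {S : Type*} [Fintype S] (P : Matrix S S ℝ) (z : S) (f : S → ℝ) (n : ℕ) : ℝ :=
  ∑ x ∈ Finset.univ.filter
      (fun (x : Fin (n + 1) → S) =>
        x 0 = z ∧ ∀ t : Fin n, ¬(x t.castSucc ≠ z ∧ x t.succ = z)),
    pathWt P x * f (x (Fin.last n))

/-- `E[∑_{t=0}^{τ-1} f(X_t)]` for the chain with matrix `P` started at `z`, where `τ` is the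
first-return epoch to `z`. -/
def retSum {S : Type*} [Fintype S] (P : Matrix S S ℝ) (z : S) (f : S → ℝ) : ℝ :=
  ∑' n : ℕ, retTerm P z f n

open Classical in
/-- `E[f(X_n); σ > n]` for the chain with matrix `P` started at `i`, where `σ` is the
first-passage epoch to `z`, `σ = min {t > 0 : X_t = z}`. -/
def passTerm {S : Type*} [Fintype S] (P : Matrix S S ℝ) (i z : S) (f : S → ℝ) (n : ℕ) : ℝ :=
  ∑ x ∈ Finset.univ.filter
      (fun (x : Fin (n + 1) → S) => x 0 = i ∧ ∀ t : Fin n, x t.succ ≠ z),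
    pathWt P x * f (x (Fin.last n))

/-- `E[∑_{t=0}^{σ-1} f(X_t)]` for the chain with matrix `P` started at `i`, where `σ` is the
first-passage epoch to `z`. -/
def passSum {S : Type*} [Fintype S] (P : Matrix S S ℝ) (i z : S) (f : S → ℝ) : ℝ :=
  ∑' n : ℕ, passTerm P i z f n

end

section AuxStmt13

variable {S : Type*} [Fintype S] [DecidableEq S]

lemma aux_pow_entry_nonneg {P : Matrix S S ℝ} (hP : ∀ i j, 0 ≤ P i j) (n : ℕ) :
    ∀ i j, 0 ≤ (P ^ n) i j := by
  induction n with
  | zero =>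
      intro i j
      simp only [pow_zero, Matrix.one_apply]
      split <;> norm_num
  | succ n ih =>
      intro i j
      rw [pow_succ, Matrix.mul_apply]
      exact Finset.sum_nonneg fun k _ => mul_nonneg (ih i k) (hP k j)

lemma aux_pow_pos_trans {P : Matrix S S ℝ} (hP : ∀ i j, 0 ≤ P i j) {m n : ℕ} {i k j : S}
    (h1 : 0 < (P ^ m) i k) (h2 : 0 < (P ^ n) k j) : 0 < (P ^ (m + n)) i j := by
  rw [pow_add, Matrix.mul_apply]
  have hle := Finset.single_le_sum (f := fun l => (P ^ m) i l * (P ^ n) l j)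
    (fun l _ => mul_nonneg (aux_pow_entry_nonneg hP m i l) (aux_pow_entry_nonneg hP n l j))
    (Finset.mem_univ k)
  exact lt_of_lt_of_le (mul_pos h1 h2) hle

lemma aux_exists_pos_of_sum_pos {f : S → ℝ} (h : 0 < ∑ s, f s) (hf : ∀ s, 0 ≤ f s) :
    ∃ s, 0 < f s := by
  by_contra hc
  push_neg at hc
  have hz : ∑ s, f s = 0 := Finset.sum_eq_zero fun s _ => le_antisymm (hc s) (hf s)
  rw [hz] at h
  exact lt_irrefl 0 h

/-- If `P'` agrees with `P` off the row `k`, then any state that can reach `k` under `P`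
can reach `k` under `P'`. -/
lemma aux_reach_update {P P' : Matrix S S ℝ} (hP : ∀ i j, 0 ≤ P i j)
    (hP' : ∀ i j, 0 ≤ P' i j) {k : S}
    (hagree : ∀ s j, s ≠ k → P' s j = P s j) :
    ∀ n i, 0 < (P ^ n) i k → ∃ m, 0 < (P' ^ m) i k := by
  intro n
  induction n with
  | zero =>
      intro i hi
      have hik : i = k := by
        by_contra h
        simp [Matrix.one_apply, h] at hi
      exact ⟨0, by simp [hik, Matrix.one_apply]⟩
  | succ n ih =>
      intro i hi
      by_cases hik : i = k
      · exact ⟨0, by simp [hik, Matrix.one_apply]⟩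
      · rw [pow_succ', Matrix.mul_apply] at hi
        obtain ⟨s, hs⟩ := aux_exists_pos_of_sum_pos hi
          (fun s => mul_nonneg (hP i s) (aux_pow_entry_nonneg hP n s k))
        rcases mul_pos_iff.mp hs with ⟨h1, h2⟩ | ⟨h1, h2⟩
        · obtain ⟨m, hm⟩ := ih s h2
          refine ⟨1 + m, ?_⟩
          have hstep : 0 < (P' ^ 1) i s := by
            rw [pow_one, hagree i s hik]; exact h1
          exact aux_pow_pos_trans hP' hstep hm
        · exact absurd h1 (not_lt.mpr (hP i s))

/-- Reachability in the one-step positive-probability graph implies reachability under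
some stationary deterministic policy. -/
lemma aux_reach_of_rtg {A : Type*} [Fintype A] [Nonempty A]
    (Mdp : MDP S A) {i j : S}
    (h : Relation.ReflTransGen (fun u v : S => ∃ a, 0 < Mdp.p u a v) i j) :
    ∃ d : S → A, ∃ n : ℕ, 0 < ((Mdp.Pmat d) ^ n) i j := by
  induction h with
  | refl => exact ⟨fun _ => Classical.arbitrary A, 0, by simp [Matrix.one_apply]⟩
  | @tail b c hb hbc ih =>
      obtain ⟨d, n, hdn⟩ := ih
      obtain ⟨a, ha⟩ := hbc
      classical
      set d' : S → A := Function.update d b a with hd'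
      have hPn : ∀ u v, 0 ≤ (Mdp.Pmat d) u v := fun u v => Mdp.p_nonneg u (d u) v
      have hP'n : ∀ u v, 0 ≤ (Mdp.Pmat d') u v := fun u v => Mdp.p_nonneg u (d' u) v
      have hagree : ∀ s t, s ≠ b → (Mdp.Pmat d') s t = (Mdp.Pmat d) s t := by
        intro s t hs
        simp [MDP.Pmat, hd', Function.update_of_ne hs]
      obtain ⟨m, hm⟩ := aux_reach_update hPn hP'n hagree n i hdn
      refine ⟨d', m + 1, ?_⟩
      have hstep : 0 < ((Mdp.Pmat d') ^ 1) b c := by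
        rw [pow_one]
        simpa [MDP.Pmat, hd'] using ha
      exact aux_pow_pos_trans hP'n hm hstep

end AuxStmt13

open Classical in
/-- for a finite MDP on `{0,…,M}` that is skip-free in the negative direction
and in which every state `i ≥ 1` has some action moving to `i-1` with positive probability,
the sequence `N_0 = 0`, `N_{m+1} = max {j : p_{ij}(a) > 0 for some i ≤ N_m, a}` is
nondecreasing and eventually constant with limit `N`, and: the MDP is communicating iff `M`
is reachable from `0` under some stationary deterministic policy iff `N = M`. -/
theorem stmt13 {M : ℕ} {A : Type*} [Fintype A] [Nonempty A]
    (Mdp : MDP (Fin (M + 1)) A)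
    (hsf : ∀ (i j : Fin (M + 1)) (a : A), (j : ℕ) + 1 < (i : ℕ) → Mdp.p i a j = 0)
    (hB : ∀ i : Fin (M + 1), i ≠ 0 → ∃ a : A, 0 < Mdp.p i a (i - 1))
    (N : ℕ → ℕ) (hN0 : N 0 = 0)
    (hNs : ∀ m : ℕ, N (m + 1) =
      Finset.sup
        (Finset.univ.filter fun j : Fin (M + 1) =>
          ∃ i : Fin (M + 1), (i : ℕ) ≤ N m ∧ ∃ a : A, 0 < Mdp.p i a j)
        (fun j => (j : ℕ))) :
    Monotone N
    ∧ ∃ L : ℕ, (∃ m₀ : ℕ, ∀ m, m₀ ≤ m → N m = L)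
      ∧ ((∀ i j : Fin (M + 1), ∃ d : Fin (M + 1) → A, ∃ n : ℕ, 0 < ((Mdp.Pmat d) ^ n) i j)
          ↔ (∃ d : Fin (M + 1) → A, ∃ n : ℕ, 0 < ((Mdp.Pmat d) ^ n) 0 (Fin.last M)))
      ∧ ((∀ i j : Fin (M + 1), ∃ d : Fin (M + 1) → A, ∃ n : ℕ, 0 < ((Mdp.Pmat d) ^ n) i j)
          ↔ L = M) := by
  classical
  set E : Fin (M + 1) → Fin (M + 1) → Prop := fun u v => ∃ a, 0 < Mdp.p u a v with hE
  have hPn : ∀ (d : Fin (M + 1) → A) (u v : Fin (M + 1)), 0 ≤ (Mdp.Pmat d) u v :=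
    fun d u v => Mdp.p_nonneg u (d u) v
  -- N is bounded by M
  have hle : ∀ m, N m ≤ M := by
    intro m
    cases m with
    | zero => simp [hN0]
    | succ m =>
        rw [hNs]
        exact Finset.sup_le fun j _ => Fin.is_le j
  -- N is monotone
  have hmono : Monotone N := by
    apply monotone_nat_of_le_succ
    intro m
    induction m with
    | zero => rw [hN0]; exact Nat.zero_le _
    | succ m ih =>
        rw [hNs m, hNs (m + 1)]
        refine Finset.sup_mono ?_
        intro j hj
        simp only [Finset.mem_filter, Finset.mem_univ, true_and] at hj ⊢
        obtain ⟨i, hi, ha⟩ := hj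
        exact ⟨i, hi.trans ih, ha⟩
  -- stabilization
  have hstab : ∀ k, N (k + 1) = N k → ∀ m, k ≤ m → N m = N k := by
    intro k hk m
    induction m with
    | zero => intro hm; have : k = 0 := Nat.le_zero.mp hm; rw [this]
    | succ m ih =>
        intro hm
        rcases Nat.lt_or_ge k (m + 1) with h | h
        · have hm' : k ≤ m := by omega
          have hNm := ih hm'
          rw [hNs m, hNm, ← hNs k, hk]
        · have : k = m + 1 := by omega
          rw [this]
  have hex : ∃ k, k ≤ M ∧ N (k + 1) = N k := by
    by_contra hc
    push_neg at hc
    have hgrow : ∀ m, m ≤ M + 1 → m ≤ N m := by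
      intro m
      induction m with
      | zero => intro _; exact Nat.zero_le _
      | succ m ih =>
          intro hm
          have h1 : m ≤ N m := ih (by omega)
          have h2 : N m ≤ N (m + 1) := hmono (Nat.le_succ m)
          have h3 : N (m + 1) ≠ N m := hc m (by omega)
          omega
    have h1 := hgrow (M + 1) le_rfl
    have h2 := hle (M + 1)
    omega
  obtain ⟨k, hkM, hk⟩ := hex
  -- downward reachability in the graph
  have hdown : ∀ v : ℕ, ∀ i j : Fin (M + 1), (i : ℕ) = (j : ℕ) + v →
      Relation.ReflTransGen E i j := by
    intro v
    induction v with
    | zero =>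
        intro i j h
        have : i = j := Fin.ext (by omega)
        exact this ▸ Relation.ReflTransGen.refl
    | succ v ih =>
        intro i j h
        have hi0 : i ≠ 0 := by
          intro h0
          rw [h0] at h
          simp at h
        obtain ⟨a, ha⟩ := hB i hi0
        have hsub : ((i - 1 : Fin (M + 1)) : ℕ) = (j : ℕ) + v := by
          rw [Fin.coe_sub_one]
          simp only [hi0, if_false]
          omega
        exact Relation.ReflTransGen.head ⟨a, ha⟩ (ih _ _ hsub)
  -- upward reachability in the graph
  have hup : ∀ m, ∀ j : Fin (M + 1), (j : ℕ) ≤ N m → Relation.ReflTransGen E 0 j := by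
    intro m
    induction m with
    | zero =>
        intro j hj
        rw [hN0] at hj
        have : j = 0 := by
          have : (j : ℕ) = 0 := Nat.le_zero.mp hj
          exact Fin.ext (by simpa using this)
        exact this ▸ Relation.ReflTransGen.refl
    | succ m ih =>
        intro j hj
        by_cases hcase : (j : ℕ) ≤ N m
        · exact ih j hcase
        · push_neg at hcase
          rw [hNs m] at hj
          have hex' := (Finset.le_sup_iff (by omega : (0 : ℕ) < (j : ℕ))).mp hj
          obtain ⟨j', hj'mem, hjj'⟩ := hex'
          simp only [Finset.mem_filter, Finset.mem_univ, true_and] at hj'mem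
          obtain ⟨i, hiN, a, ha⟩ := hj'mem
          have h1 : Relation.ReflTransGen E 0 i := ih i hiN
          have h2 : Relation.ReflTransGen E i j' := Relation.ReflTransGen.single ⟨a, ha⟩
          have h3 : Relation.ReflTransGen E j' j := hdown ((j' : ℕ) - (j : ℕ)) j' j (by omega)
          exact (h1.trans h2).trans h3
  -- reachability under a policy bounds values by N
  have hbound : ∀ (d : Fin (M + 1) → A) (n : ℕ) (j : Fin (M + 1)),
      0 < ((Mdp.Pmat d) ^ n) 0 j → (j : ℕ) ≤ N n := by
    intro d n
    induction n with
    | zero =>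
        intro j h
        have hj0 : (0 : Fin (M + 1)) = j := by
          by_contra hne
          simp [Matrix.one_apply, hne] at h
        rw [hN0, ← hj0]
        simp
    | succ n ih =>
        intro j h
        rw [pow_succ, Matrix.mul_apply] at h
        obtain ⟨s, hs⟩ := aux_exists_pos_of_sum_pos h
          (fun s => mul_nonneg (aux_pow_entry_nonneg (hPn d) n 0 s) (hPn d s j))
        rcases mul_pos_iff.mp hs with ⟨h1, h2⟩ | ⟨h1, h2⟩
        · have hsN := ih s h1
          rw [hNs n]
          refine Finset.le_sup (f := fun x : Fin (M + 1) => (x : ℕ)) ?_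
          simp only [Finset.mem_filter, Finset.mem_univ, true_and]
          exact ⟨s, hsN, d s, by simpa [MDP.Pmat] using h2⟩
        · exact absurd h1 (not_lt.mpr (aux_pow_entry_nonneg (hPn d) n 0 s))
  -- main implications
  have himp1 : N k = M → ∀ i j : Fin (M + 1),
      ∃ d : Fin (M + 1) → A, ∃ n : ℕ, 0 < ((Mdp.Pmat d) ^ n) i j := by
    intro hNk i j
    have h1 : Relation.ReflTransGen E i 0 := hdown (i : ℕ) i 0 (by simp)
    have h2 : Relation.ReflTransGen E 0 j := hup k j (by rw [hNk]; exact Fin.is_le j)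
    exact aux_reach_of_rtg Mdp (h1.trans h2)
  have himp2 : (∃ d : Fin (M + 1) → A, ∃ n : ℕ, 0 < ((Mdp.Pmat d) ^ n) 0 (Fin.last M)) →
      N k = M := by
    rintro ⟨d, n, hdn⟩
    have h1 : M ≤ N n := by
      have := hbound d n (Fin.last M) hdn
      simpa using this
    have h2 : N n ≤ N k := by
      rcases le_total n k with h | h
      · exact hmono h
      · exact le_of_eq (hstab k hk n h)
    have h3 := hle k
    omega
  refine ⟨hmono, N k, ⟨k, fun m hm => hstab k hk m hm⟩, ?_, ?_⟩
  · constructor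
    · intro h
      exact h 0 (Fin.last M)
    · intro h
      exact himp1 (himp2 h)
  · constructor
    · intro h
      exact himp2 (h 0 (Fin.last M))
    · exact himp1
end

section
/- Consider a finite communicating MDP on S = {0, 1, …, M} that is skip-free in the negative direction (p_{ij}(a) = 0 for all j < i − 1 and a ∈ A) and satisfies: for each i ∈ {1, …, M} there is at least one a ∈ A with p_{i,i−1}(a) > 0. Then for every stationary deterministic policy d there exists a unichain stationary deterministic policy d' such that g_{d'}(j) ≤ g_d(j) for every state j ∈ S; in particular, the minimum of the expected average cost over unichain stationary deterministic policies equals the minimum over all stationary deterministic policies. -/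
open Finset Filter

/-- A closed communicating class of the matrix `P`: a nonempty set of mutually reachable
states that is closed under one-step transitions of positive probability. -/
def IsClosedClass {S : Type*} [Fintype S] [DecidableEq S]
    (P : Matrix S S ℝ) (E : Set S) : Prop :=
  E.Nonempty
    ∧ (∀ i ∈ E, ∀ j ∈ E, ∃ n : ℕ, 0 < (P ^ n) i j)
    ∧ (∀ i ∈ E, ∀ j, 0 < P i j → j ∈ E)

/-!
The gain `g = avgCost d` of any policy is harmonic for `P = Pmat d` (mean ergodic theorem in
finite dimension), so by the minimum principle the set where `g` attains its minimum is closed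
under `P`; a minimal closed set `E` inside it is a communicating class. As the MDP is
communicating, `d` can be changed off `E` into a policy `d'` under which `E` is reached from
every state; then `E` is the only closed class of `d'`, and `avgCost d' = g = min g` on `E`.
By the maximum principle for the harmonic `avgCost d'`, its maximum is attained on `E`, whence
`avgCost d' ≤ min g ≤ g`.
-/

open Finset Filter Topology Function Bornology Matrix Relation

theorem LinearMap.isCompl_eqLocus_range_sub_one {E : Type*} [NormedAddCommGroup E]
    [NormedSpace ℝ E] [FiniteDimensional ℝ E] (f : E →ₗ[ℝ] E) (hf : LipschitzWith 1 f) :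
    IsCompl (LinearMap.eqLocus f 1) (LinearMap.range (f - 1)) := by
  refine (Submodule.isCompl_iff_disjoint _ _ ?_).2 ?_
  · rw [LinearMap.eqLocus_eq_ker_sub, add_comm, LinearMap.finrank_range_add_finrank_ker]
  rw [Submodule.disjoint_def]
  rintro _ hfix ⟨u, rfl⟩
  -- the Birkhoff averages of the fixed point `f u - u` are constant, yet they telescope to `0`
  have hbdd : IsBounded (Set.range fun n ↦ (⇑f)^[n] u) :=
    isBounded_iff_forall_norm_le.2 ⟨‖u‖, Set.forall_mem_range.2 fun n ↦ by
      simpa [iterate_map_zero (f : E →+ E)] using (hf.iterate n).dist_le_mul u 0⟩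
  have hsub : ∀ n x y, f^[n] (x - y) = f^[n] x - f^[n] y := iterate_map_sub (f : E →+ E)
  refine tendsto_nhds_unique
    ((show IsFixedPt f ((f - 1) u) from hfix).tendsto_birkhoffAverage ℝ _root_.id) ?_
  simpa [birkhoffAverage, birkhoffSum, Finset.sum_sub_distrib, smul_sub, hsub] using
    tendsto_birkhoffAverage_apply_sub_birkhoffAverage ℝ (g := _root_.id) hbdd

theorem LinearMap.exists_tendsto_birkhoffAverage {E : Type*} [NormedAddCommGroup E]
    [NormedSpace ℝ E] [FiniteDimensional ℝ E] (f : E →ₗ[ℝ] E) (hf : LipschitzWith 1 f) (x : E) :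
    ∃ y, f y = y ∧ Tendsto (birkhoffAverage ℝ f _root_.id · x) atTop (𝓝 y) := by
  have hc := f.isCompl_eqLocus_range_sub_one hf
  let g : E →L[ℝ] LinearMap.eqLocus f 1 :=
    LinearMap.toContinuousLinearMap (Submodule.projectionOnto _ _ hc)
  refine ⟨g x, (g x).2, f.tendsto_birkhoffAverage_of_ker_subset_closure hf g
    (fun y ↦ Submodule.projectionOnto_apply_left hc y) (fun y hy ↦ subset_closure ?_) x⟩
  rwa [← Submodule.ker_projectionOnto hc]

theorem Real.iInf_subtype_eq_iInf_of_forall_exists_le {ι : Type*} {p : ι → Prop} {f : ι → ℝ}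
    (h : ∀ i, ∃ j, p j ∧ f j ≤ f i) : ⨅ j : Subtype p, f j = ⨅ i, f i := by
  rcases isEmpty_or_nonempty ι with hι | ⟨⟨i₀⟩⟩
  · simp only [Real.iInf_of_isEmpty]
  have : Nonempty ι := ⟨i₀⟩
  obtain ⟨j₀, hj₀, -⟩ := h i₀
  have : Nonempty (Subtype p) := ⟨⟨j₀, hj₀⟩⟩
  by_cases hbdd : BddBelow (Set.range f)
  · have hbdd' : BddBelow (Set.range fun j : Subtype p ↦ f j) :=
      hbdd.mono (Set.range_subset_iff.2 fun j ↦ Set.mem_range_self _)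
    refine le_antisymm (le_ciInf fun i ↦ ?_) (le_ciInf fun j ↦ ciInf_le hbdd j)
    obtain ⟨j, hj, hle⟩ := h i
    exact (ciInf_le hbdd' ⟨j, hj⟩).trans hle
  · rw [Real.iInf_of_not_bddBelow hbdd, Real.iInf_of_not_bddBelow]
    rintro ⟨b, hb⟩
    refine hbdd ⟨b, Set.forall_mem_range.2 fun i ↦ ?_⟩
    obtain ⟨j, hj, hle⟩ := h i
    exact (hb ⟨⟨j, hj⟩, rfl⟩).trans hle

section MarkovChain

variable {S : Type*} {P Q : Matrix S S ℝ} {C E : Set S}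

abbrev Reaches (P : Matrix S S ℝ) : S → S → Prop :=
  ReflTransGen fun i j ↦ 0 < P i j

def IsAbsorbing (P : Matrix S S ℝ) (C : Set S) : Prop :=
  ∀ i ∈ C, ∀ j, 0 < P i j → j ∈ C

theorem IsAbsorbing.mem_of_reaches (hC : IsAbsorbing P C) {i j : S} (hi : i ∈ C)
    (h : Reaches P i j) : j ∈ C := by
  induction h with
  | refl => exact hi
  | tail _ hjk ih => exact hC _ ih _ hjk

theorem isAbsorbing_setOf_reaches (i : S) : IsAbsorbing P {j | Reaches P i j} :=
  fun _ hj _ hjk ↦ ReflTransGen.tail hj hjk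

theorem IsAbsorbing.of_rows_eq (hC : IsAbsorbing P C) (h : ∀ i ∈ C, Q i = P i) :
    IsAbsorbing Q C := fun i hi j hij ↦
  hC i hi j (by rwa [← h i hi])

theorem Minimal.reaches (hE : Minimal (fun C ↦ C.Nonempty ∧ IsAbsorbing P C) E) {i j : S}
    (hi : i ∈ E) (hj : j ∈ E) : Reaches P i j :=
  hE.2 ⟨⟨i, .refl⟩, isAbsorbing_setOf_reaches i⟩ (fun _ ↦ hE.1.2.mem_of_reaches hi) hj

theorem Minimal.of_rows_eq (hE : Minimal (fun C ↦ C.Nonempty ∧ IsAbsorbing P C) E)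
    (h : ∀ i ∈ E, Q i = P i) : Minimal (fun C ↦ C.Nonempty ∧ IsAbsorbing Q C) E :=
  ⟨⟨hE.1.1, hE.1.2.of_rows_eq h⟩, fun _ hC hCE ↦
    hE.2 ⟨hC.1, hC.2.of_rows_eq fun i hi ↦ (h i (hCE hi)).symm⟩ hCE⟩

variable [Fintype S] [DecidableEq S]

theorem Matrix.norm_mulVec_le_of_mem_rowStochastic (hP : P ∈ rowStochastic ℝ S) (v : S → ℝ) :
    ‖P *ᵥ v‖ ≤ ‖v‖ := by
  refine (pi_norm_le_iff_of_nonneg (norm_nonneg v)).2 fun i ↦ ?_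
  calc ‖(P *ᵥ v) i‖ ≤ ∑ j, ‖P i j * v j‖ := norm_sum_le _ _
    _ ≤ ∑ j, P i j * ‖v‖ := sum_le_sum fun j _ ↦ by
      rw [norm_mul, Real.norm_of_nonneg (nonneg_of_mem_rowStochastic hP)]
      exact mul_le_mul_of_nonneg_left (norm_le_pi_norm v j) (nonneg_of_mem_rowStochastic hP)
    _ = ‖v‖ := by rw [← sum_mul, sum_row_of_mem_rowStochastic hP i, one_mul]

theorem Matrix.exists_tendsto_cesaro_of_mem_rowStochastic (hP : P ∈ rowStochastic ℝ S)
    (c : S → ℝ) : ∃ g, P *ᵥ g = g ∧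
      Tendsto (fun n : ℕ ↦ (n : ℝ)⁻¹ • ∑ t ∈ range n, P ^ t *ᵥ c) atTop (𝓝 g) := by
  have hlip : LipschitzWith 1 P.mulVecLin := .of_dist_le_mul fun v w ↦ by
    simpa [dist_eq_norm, ← mulVec_sub] using norm_mulVec_le_of_mem_rowStochastic hP (v - w)
  have hiter : ∀ t, (⇑P.mulVecLin)^[t] c = P ^ t *ᵥ c := fun t ↦ by
    induction t with
    | zero => simp
    | succ t ih => rw [iterate_succ_apply', ih, mulVecLin_apply, mulVec_mulVec, pow_succ']
  obtain ⟨g, hg, hlim⟩ := P.mulVecLin.exists_tendsto_birkhoffAverage hlip c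
  exact ⟨g, hg, by simpa [birkhoffAverage, birkhoffSum, hiter] using hlim⟩

theorem Matrix.exists_pos_of_pow_succ_apply_pos (hP : ∀ i j, 0 ≤ P i j) {n : ℕ} {i k : S}
    (h : 0 < (P ^ (n + 1)) i k) : ∃ l, 0 < P i l ∧ 0 < (P ^ n) l k := by
  rw [pow_succ', mul_apply, Finset.sum_pos_iff_of_nonneg
    fun l _ ↦ mul_nonneg (hP i l) (pow_apply_nonneg hP n l k)] at h
  obtain ⟨l, -, hl⟩ := h
  exact ⟨l, pos_of_mul_pos_left hl (pow_apply_nonneg hP n l k),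
    pos_of_mul_pos_right hl (hP i l)⟩

theorem reaches_iff_exists_pow_apply_pos (hP : ∀ i j, 0 ≤ P i j) {i j : S} :
    Reaches P i j ↔ ∃ n, 0 < (P ^ n) i j := by
  constructor
  · intro h
    induction h with
    | refl => exact ⟨0, by simp⟩
    | @tail l k _ hlk ih =>
      obtain ⟨n, hn⟩ := ih
      refine ⟨n + 1, ?_⟩
      rw [pow_succ, mul_apply]
      exact lt_of_lt_of_le (mul_pos hn hlk) <| single_le_sum (f := fun r ↦ (P ^ n) i r * P r k)
        (fun r _ ↦ mul_nonneg (pow_apply_nonneg hP n i r) (hP r k)) (mem_univ l)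
  · rintro ⟨n, hn⟩
    induction n generalizing i with
    | zero =>
      obtain rfl : i = j := by by_contra h; simp [one_apply_ne h] at hn
      exact .refl
    | succ n ih =>
      obtain ⟨l, hil, hlj⟩ := exists_pos_of_pow_succ_apply_pos hP hn
      exact .head hil (ih hlj)

theorem Matrix.isAbsorbing_setOf_forall_le_of_mulVec_eq (hP : P ∈ rowStochastic ℝ S)
    {h : S → ℝ} (hh : P *ᵥ h = h) : IsAbsorbing P {i | ∀ k, h i ≤ h k} := by
  intro i hi j hij
  have hsum : ∑ k, P i k * (h k - h i) = 0 := by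
    simp only [mul_sub, sum_sub_distrib, ← sum_mul, sum_row_of_mem_rowStochastic hP i, one_mul]
    exact sub_eq_zero.2 (congrFun hh i)
  have hj := (sum_eq_zero_iff_of_nonneg fun k _ ↦ mul_nonneg (nonneg_of_mem_rowStochastic hP)
    (sub_nonneg.2 (hi k))).1 hsum j (mem_univ j)
  rw [mul_eq_zero, sub_eq_zero] at hj
  exact fun k ↦ (hj.resolve_left hij.ne').symm ▸ hi k

theorem Matrix.isAbsorbing_setOf_forall_ge_of_mulVec_eq (hP : P ∈ rowStochastic ℝ S)
    {h : S → ℝ} (hh : P *ᵥ h = h) : IsAbsorbing P {i | ∀ k, h k ≤ h i} := by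
  simpa using isAbsorbing_setOf_forall_le_of_mulVec_eq hP (h := -h) (by rw [mulVec_neg, hh])

theorem IsAbsorbing.pow_mulVec_apply_eq (hP : ∀ i j, 0 ≤ P i j)
    (hC : IsAbsorbing P C) (hQ : ∀ i ∈ C, Q i = P i) {c c' : S → ℝ} (hc : ∀ i ∈ C, c' i = c i)
    (t : ℕ) : ∀ i ∈ C, (Q ^ t *ᵥ c') i = (P ^ t *ᵥ c) i := by
  induction t with
  | zero => simpa using hc
  | succ t ih =>
    intro i hi
    rw [pow_succ', pow_succ', ← mulVec_mulVec, ← mulVec_mulVec]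
    show ∑ j, Q i j * (Q ^ t *ᵥ c') j = ∑ j, P i j * (P ^ t *ᵥ c) j
    refine sum_congr rfl fun j _ ↦ ?_
    rw [hQ i hi]
    rcases (hP i j).eq_or_lt with h | h
    · simp [← h]
    · rw [ih j (hC i hi j h)]

theorem Minimal.isClosedClass (hP : ∀ i j, 0 ≤ P i j)
    (hE : Minimal (fun C ↦ C.Nonempty ∧ IsAbsorbing P C) E) : IsClosedClass P E :=
  ⟨hE.1.1, fun _ hi _ hj ↦ (reaches_iff_exists_pow_apply_pos hP).1 (hE.reaches hi hj), hE.1.2⟩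

theorem IsClosedClass.existsUnique (hP : ∀ i j, 0 ≤ P i j) (hE : IsClosedClass P E)
    (hreach : ∀ i, ∃ k ∈ E, Reaches P i k) : ∃! F : Set S, IsClosedClass P F := by
  refine ⟨E, hE, fun F hF ↦ ?_⟩
  have hreaches : ∀ {C : Set S}, IsClosedClass P C → ∀ i ∈ C, ∀ j ∈ C, Reaches P i j :=
    fun hC i hi j hj ↦ (reaches_iff_exists_pow_apply_pos hP).2 (hC.2.1 i hi j hj)
  obtain ⟨i, hi⟩ := hF.1
  obtain ⟨k, hkE, hik⟩ := hreach i
  have hkF : k ∈ F := IsAbsorbing.mem_of_reaches hF.2.2 hi hik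
  exact Set.Subset.antisymm
    (fun j hj ↦ IsAbsorbing.mem_of_reaches hE.2.2 hkE (hreaches hF k hkF j hj))
    fun j hj ↦ IsAbsorbing.mem_of_reaches hF.2.2 hkF (hreaches hE k hkE j hj)

end MarkovChain

namespace MDP

variable {S A : Type*} [Fintype S] [DecidableEq S] (Mdp : MDP S A)

theorem Pmat_mem_rowStochastic (d : S → A) : Mdp.Pmat d ∈ rowStochastic ℝ S :=
  mem_rowStochastic_iff_sum.2 ⟨fun i ↦ Mdp.p_nonneg i (d i), fun i ↦ Mdp.p_sum_one i (d i)⟩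

theorem Pmat_mulVec_avgCost (d : S → A) : Mdp.Pmat d *ᵥ Mdp.avgCost d = Mdp.avgCost d := by
  obtain ⟨g, hg, hlim⟩ :=
    exists_tendsto_cesaro_of_mem_rowStochastic (Mdp.Pmat_mem_rowStochastic d) (Mdp.cvec d)
  have hgain : Mdp.avgCost d = g := funext fun i ↦ by
    simpa [avgCost, Finset.sum_apply] using (tendsto_pi_nhds.1 hlim i).limsup_eq
  rwa [hgain]

theorem avgCost_eq_of_eqOn {d d' : S → A} {E : Set S} (hE : IsAbsorbing (Mdp.Pmat d) E)
    (h : ∀ k ∈ E, d' k = d k) {k : S} (hk : k ∈ E) : Mdp.avgCost d' k = Mdp.avgCost d k := by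
  unfold avgCost
  congr! 4 with n t
  exact hE.pow_mulVec_apply_eq (Mdp.Pmat_mem_rowStochastic d).1
    (fun i hi ↦ funext fun j ↦ by simp [Pmat, h i hi]) (fun i hi ↦ by simp [cvec, h i hi]) t k hk

theorem exists_policy_reaches
    (hcomm : ∀ i j : S, ∃ e : S → A, ∃ n, 0 < (Mdp.Pmat e ^ n) i j) (d : S → A) {E : Set S}
    (hE : E.Nonempty) :
    ∃ d' : S → A, (∀ k ∈ E, d' k = d k) ∧ ∀ i, ∃ k ∈ E, Reaches (Mdp.Pmat d') i k := by
  classical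
  obtain ⟨z, hz⟩ := hE
  have hex : ∀ i, ∃ n, ∃ e : S → A, ∃ k ∈ E, 0 < (Mdp.Pmat e ^ n) i k := fun i ↦
    let ⟨e, n, h⟩ := hcomm i z; ⟨n, e, z, hz, h⟩
  -- `dist i`: the least number of steps in which some policy can lead from `i` into `E`
  let dist i := Nat.find (hex i)
  have hstep : ∀ i ∉ E, ∃ a l, 0 < Mdp.p i a l ∧ dist l < dist i := by
    intro i hi
    obtain ⟨e, k, hk, hpos⟩ := Nat.find_spec (hex i)
    rcases hn : dist i with _ | n
    · obtain rfl : i = k := by by_contra h; simp [dist, hn, one_apply_ne h] at hpos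
      exact absurd hk hi
    · rw [show Nat.find (hex i) = n + 1 from hn] at hpos
      obtain ⟨l, hil, hlk⟩ :=
        exists_pos_of_pow_succ_apply_pos (Mdp.Pmat_mem_rowStochastic e).1 hpos
      exact ⟨e i, l, hil, (Nat.find_le ⟨e, k, hk, hlk⟩).trans_lt n.lt_succ_self⟩
  choose a l hpos hlt using hstep
  refine ⟨fun i ↦ if hi : i ∈ E then d i else a i hi, fun k hk ↦ dif_pos hk, fun i ↦ ?_⟩
  induction i using (measure dist).wf.induction with
  | _ i ih =>
    by_cases hi : i ∈ E
    · exact ⟨i, hi, .refl⟩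
    · obtain ⟨k, hk, hreach⟩ := ih (l i hi) (hlt i hi)
      exact ⟨k, hk, .head (by simpa [Pmat, hi] using hpos i hi) hreach⟩

theorem exists_unichain_le [Nonempty S]
    (hcomm : ∀ i j : S, ∃ e : S → A, ∃ n, 0 < (Mdp.Pmat e ^ n) i j) (d : S → A) :
    ∃ d' : S → A, (∃! E : Set S, IsClosedClass (Mdp.Pmat d') E) ∧
      ∀ j, Mdp.avgCost d' j ≤ Mdp.avgCost d j := by
  have hP := Mdp.Pmat_mem_rowStochastic
  obtain ⟨z, hz⟩ := Finite.exists_min (Mdp.avgCost d)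
  obtain ⟨E, hEZ, hEmin⟩ := exists_minimal_le_of_wellFoundedLT
    (fun C ↦ C.Nonempty ∧ IsAbsorbing (Mdp.Pmat d) C) {i | ∀ k, Mdp.avgCost d i ≤ Mdp.avgCost d k}
    ⟨⟨z, hz⟩, isAbsorbing_setOf_forall_le_of_mulVec_eq (hP d) (Mdp.Pmat_mulVec_avgCost d)⟩
  obtain ⟨d', hd'E, hreach⟩ := Mdp.exists_policy_reaches hcomm d hEmin.1.1
  have hrows : ∀ i ∈ E, Mdp.Pmat d' i = Mdp.Pmat d i :=
    fun i hi ↦ funext fun j ↦ by simp [Pmat, hd'E i hi]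
  refine ⟨d', ((hEmin.of_rows_eq hrows).isClosedClass (hP d').1).existsUnique (hP d').1 hreach,
    fun j ↦ ?_⟩
  obtain ⟨x, hx⟩ := Finite.exists_max (Mdp.avgCost d')
  obtain ⟨k, hkE, hxk⟩ := hreach x
  have hk : ∀ i, Mdp.avgCost d' i ≤ Mdp.avgCost d' k := IsAbsorbing.mem_of_reaches
    (isAbsorbing_setOf_forall_ge_of_mulVec_eq (hP d') (Mdp.Pmat_mulVec_avgCost d')) hx hxk
  calc Mdp.avgCost d' j ≤ Mdp.avgCost d' k := hk j
    _ = Mdp.avgCost d k := Mdp.avgCost_eq_of_eqOn hEmin.1.2 hd'E hkE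
    _ ≤ Mdp.avgCost d j := hEZ hkE j

end MDP

theorem stmt14_general {M : ℕ} {A : Type*}
    (Mdp : MDP (Fin (M + 1)) A)
    (hcomm : ∀ i j : Fin (M + 1), ∃ d : Fin (M + 1) → A, ∃ n : ℕ, 0 < ((Mdp.Pmat d) ^ n) i j) :
    (∀ d : Fin (M + 1) → A, ∃ d' : Fin (M + 1) → A,
      (∃! E : Set (Fin (M + 1)), IsClosedClass (Mdp.Pmat d') E)
      ∧ ∀ j, Mdp.avgCost d' j ≤ Mdp.avgCost d j)
    ∧ ∀ j : Fin (M + 1),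
      (⨅ d' : {dd : Fin (M + 1) → A //
          ∃! E : Set (Fin (M + 1)), IsClosedClass (Mdp.Pmat dd) E},
        Mdp.avgCost (d' : Fin (M + 1) → A) j)
      = ⨅ d : Fin (M + 1) → A, Mdp.avgCost d j := by
  have hdom := Mdp.exists_unichain_le hcomm
  refine ⟨hdom, fun j ↦ Real.iInf_subtype_eq_iInf_of_forall_exists_le
    (f := (Mdp.avgCost · j)) fun d ↦ ?_⟩
  obtain ⟨d', hd', hle⟩ := hdom d
  exact ⟨d', hd', hle j⟩

/-- for a finite communicating skip-free MDP on `{0,…,M}` (with every state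
`i ≥ 1` having some action moving down with positive probability), every stationary
deterministic policy is dominated, in average cost from every starting state, by a unichain
stationary deterministic policy; in particular, for every starting state the minimum of the
average cost over unichain policies equals the minimum over all policies. -/
theorem stmt14 {M : ℕ} {A : Type*} [Fintype A] [Nonempty A]
    (Mdp : MDP (Fin (M + 1)) A)
    (hsf : ∀ (i j : Fin (M + 1)) (a : A), (j : ℕ) + 1 < (i : ℕ) → Mdp.p i a j = 0)
    (hB : ∀ i : Fin (M + 1), i ≠ 0 → ∃ a : A, 0 < Mdp.p i a (i - 1))
    (hcomm : ∀ i j : Fin (M + 1), ∃ d : Fin (M + 1) → A, ∃ n : ℕ, 0 < ((Mdp.Pmat d) ^ n) i j) :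
    (∀ d : Fin (M + 1) → A, ∃ d' : Fin (M + 1) → A,
      (∃! E : Set (Fin (M + 1)), IsClosedClass (Mdp.Pmat d') E)
      ∧ ∀ j, Mdp.avgCost d' j ≤ Mdp.avgCost d j)
    ∧ ∀ j : Fin (M + 1),
      (⨅ d' : {dd : Fin (M + 1) → A //
          ∃! E : Set (Fin (M + 1)), IsClosedClass (Mdp.Pmat dd) E},
        Mdp.avgCost (d' : Fin (M + 1) → A) j)
      = ⨅ d : Fin (M + 1) → A, Mdp.avgCost d j :=
  stmt14_general Mdp hcomm
end

section
/- Let a finite MDP on S = {0, 1, …, M} with finite action set A, costs c_i(a) and transition probabilities p_{ij}(a) be given, and let β ∈ (0,1). Define the modified average-cost MDP on {0, 1, …, M+1} by p'_{ij}(a) = β p_{ij}(a) and c'_i(a) = c_i(a) for i, j ≤ M; p'_{M+1,M}(a) = β and c'_{M+1}(a) = 0; and p'_{i,M+1}(a) = 1 − β for all i ∈ {0,…,M+1}. Suppose g' ∈ ℝ and h' : {0,…,M+1} → ℝ satisfy the average cost optimality equations of the modified model: h'_i = min_{a∈A} { c'_i(a) − g' + ∑_{j=0}^{M+1} p'_{ij}(a)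 h'_j } for all i, where the equation for state M+1 holds with no minimisation (the right-hand side is independent of a). Then v_j := h'_j − h'_{M+1} + g'/(1−β), j = 0,…,M, satisfies the discounted cost optimality equations v_i = min_{a∈A} { c_i(a) + β ∑_{j=0}^M p_{ij}(a) v_j } for all i ∈ {0,…,M}; for every i ≤ M, an action attains the minimum in the modified average-cost equation at i if and only if it attains the minimum in the discounted equation at i; and, writing y'_j = h'_j − h'_{j−1} for j = 1,…,M+1, one has v_j = g'/(1−β) − (y'_{j+1} + ⋯ + y'_{M+1}) for each j ≤ M. -/
open Finset

/-!
From every state the modified chain jumps to the extra state `M+1` with probability `1 - β` and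
otherwise follows `β p`. Hence, for `i ≤ M`, the modified one-step value of an action exceeds its
discounted one-step value for `v` by the constant `h'_{M+1} - g'/(1-β)`, whatever the action: the
two minimisations have the same minimisers, and the average-cost equation at `i` becomes the
discounted equation for `v`. The last formula is a telescoping sum.
-/

theorem Fin.sum_Ioi_sub_sub_one {G : Type*} [AddCommGroup G] {n : ℕ} (f : Fin (n + 1) → G)
    (j : Fin (n + 1)) : ∑ k ∈ Ioi j, (f k - f (k - 1)) = f (last n) - f j := by
  induction j using Fin.reverseInduction with
  | last => rw [← Fin.top_eq_last, Ioi_top, sum_empty, sub_self]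
  | cast i ih =>
    have hIoi : Ioi i.castSucc = Ici i.succ := by
      ext k
      simp only [mem_Ioi, mem_Ici, Fin.lt_def, Fin.le_def, Fin.val_castSucc, Fin.val_succ]
      omega
    rw [hIoi, Ici_eq_cons_Ioi, Finset.sum_cons, ih, ← Fin.coeSucc_eq_succ, add_sub_cancel_right]
    abel

theorem sum_mul_eq_sum_mul_add_of_sum_eq_one {ι R : Type*} [Fintype ι] [CommRing R]
    {p u v : ι → R} {K : R} (hp : ∑ j, p j = 1) (hv : ∀ j, v j = u j + K) :
    ∑ j, p j * v j = ∑ j, p j * u j + K := by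
  simp only [hv, mul_add, sum_add_distrib, ← sum_mul, hp, one_mul]

section ModifiedModel

variable {M : ℕ} {A : Type*}

def modifiedTransition (p : Fin (M + 1) → A → Fin (M + 1) → ℝ) (β : ℝ) :
    Fin (M + 2) → A → Fin (M + 2) → ℝ := fun i a j =>
  if hj : (j : ℕ) < M + 1 then
    if hi : (i : ℕ) < M + 1 then β * p ⟨(i : ℕ), hi⟩ a ⟨(j : ℕ), hj⟩
    else if (j : ℕ) = M then β else 0
  else 1 - β

theorem sum_modifiedTransition_castSucc_mul (p : Fin (M + 1) → A → Fin (M + 1) → ℝ) (β : ℝ)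
    (i : Fin (M + 1)) (a : A) (h : Fin (M + 2) → ℝ) :
    ∑ j, modifiedTransition p β i.castSucc a j * h j
      = β * ∑ j, p i a j * h j.castSucc + (1 - β) * h (Fin.last (M + 1)) := by
  simp [Fin.sum_univ_castSucc (n := M + 1), modifiedTransition, mul_sum, mul_assoc, Fin.is_le]

theorem modified_value_eq_discounted_value_add (c : Fin (M + 1) → A → ℝ)
    (p : Fin (M + 1) → A → Fin (M + 1) → ℝ) {β : ℝ} (hβ : β ≠ 1) {i : Fin (M + 1)} {a : A}
    (hsum : ∑ j, p i a j = 1) (g : ℝ) (h : Fin (M + 2) → ℝ) {v : Fin (M + 1) → ℝ}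
    (hv : ∀ j, v j = h j.castSucc + (g / (1 - β) - h (Fin.last (M + 1)))) :
    c i a - g + ∑ j, modifiedTransition p β i.castSucc a j * h j
      = c i a + β * ∑ j, p i a j * v j + (h (Fin.last (M + 1)) - g / (1 - β)) := by
  have h1β : 1 - β ≠ 0 := sub_ne_zero.mpr hβ.symm
  rw [sum_modifiedTransition_castSucc_mul, sum_mul_eq_sum_mul_add_of_sum_eq_one hsum hv]
  field_simp
  ring

end ModifiedModel

theorem stmt16_general {M : ℕ} {A : Type*} [Fintype A] [Nonempty A]
    (c : Fin (M + 1) → A → ℝ) (p : Fin (M + 1) → A → Fin (M + 1) → ℝ)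
    (hsum : ∀ i a, ∑ j, p i a j = 1)
    (β : ℝ) (hβ1 : β < 1)
    (p' : Fin (M + 2) → A → Fin (M + 2) → ℝ)
    (hp' : ∀ (i : Fin (M + 2)) (a : A) (j : Fin (M + 2)),
      p' i a j =
        if hj : (j : ℕ) < M + 1 then
          if hi : (i : ℕ) < M + 1 then β * p ⟨(i : ℕ), hi⟩ a ⟨(j : ℕ), hj⟩
          else if (j : ℕ) = M then β else 0
        else 1 - β)
    (c' : Fin (M + 2) → A → ℝ)
    (hc' : ∀ (i : Fin (M + 2)) (a : A),
      c' i a = if hi : (i : ℕ) < M + 1 then c ⟨(i : ℕ), hi⟩ a else 0)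
    (g' : ℝ) (h' : Fin (M + 2) → ℝ)
    (hacoe : ∀ i : Fin (M + 2), h' i = ⨅ a : A, (c' i a - g' + ∑ j, p' i a j * h' j))
    (v : Fin (M + 1) → ℝ)
    (hv : ∀ j : Fin (M + 1), v j = h' j.castSucc - h' (Fin.last (M + 1)) + g' / (1 - β)) :
    (∀ i : Fin (M + 1), v i = ⨅ a : A, (c i a + β * ∑ j, p i a j * v j))
    ∧ (∀ (i : Fin (M + 1)) (a : A),
        (c' i.castSucc a - g' + ∑ j, p' i.castSucc a j * h' j = h' i.castSucc)
          ↔ (c i a + β * ∑ j, p i a j * v j = v i))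
    ∧ (∀ j : Fin (M + 1),
        v j = g' / (1 - β) - ∑ k ∈ Finset.Ioi j.castSucc, (h' k - h' (k - 1))) := by
  obtain rfl : p' = modifiedTransition p β := by
    funext i a j
    exact hp' i a j
  set K := h' (Fin.last (M + 1)) - g' / (1 - β)
  have hv' : ∀ j, v j = h' j.castSucc + (g' / (1 - β) - h' (Fin.last (M + 1))) := fun j => by
    rw [hv]; ring
  have key : ∀ (i : Fin (M + 1)) (a : A),
      c' i.castSucc a - g' + ∑ j, modifiedTransition p β i.castSucc a j * h' j
        = c i a + β * ∑ j, p i a j * v j + K := fun i a => by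
    rw [show c' i.castSucc a = c i a by simp [hc', Fin.is_le]]
    exact modified_value_eq_discounted_value_add c p hβ1.ne (hsum i a) g' h' hv'
  have hvK : ∀ i : Fin (M + 1), v i + K = h' i.castSucc := fun i => by
    rw [hv]; ring
  refine ⟨fun i => ?_, fun i a => ?_, fun j => ?_⟩
  · rw [← add_left_inj K, hvK, hacoe, iInf_congr (key i),
      ciInf_add (Set.finite_range _).bddBelow]
  · rw [key, ← hvK, add_left_inj]
  · rw [Fin.sum_Ioi_sub_sub_one, hv]
    ring

/-- the discounted-cost problem as a modified average-cost problem. If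
`(g', h')` solve the average cost optimality equations of the modified model on
`{0,…,M+1}` (with `p'_{ij}(a) = β p_{ij}(a)`, `p'_{M+1,M}(a) = β`, `p'_{i,M+1}(a) = 1-β`,
`c'_i(a) = c_i(a)` for `i ≤ M`, `c'_{M+1}(a) = 0`), then
`v_j = h'_j - h'_{M+1} + g'/(1-β)` solves the `β`-discounted optimality equations of the
original model; an action attains the minimum in the modified average-cost equation at
`i ≤ M` iff it attains the minimum in the discounted equation; and with
`y'_j = h'_j - h'_{j-1}`, `v_j = g'/(1-β) - (y'_{j+1} + ⋯ + y'_{M+1})`. -/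
theorem stmt16 {M : ℕ} {A : Type*} [Fintype A] [Nonempty A]
    (c : Fin (M + 1) → A → ℝ) (p : Fin (M + 1) → A → Fin (M + 1) → ℝ)
    (hp : ∀ i a j, 0 ≤ p i a j) (hsum : ∀ i a, ∑ j, p i a j = 1)
    (β : ℝ) (hβ0 : 0 < β) (hβ1 : β < 1)
    (p' : Fin (M + 2) → A → Fin (M + 2) → ℝ)
    (hp' : ∀ (i : Fin (M + 2)) (a : A) (j : Fin (M + 2)),
      p' i a j =
        if hj : (j : ℕ) < M + 1 then
          if hi : (i : ℕ) < M + 1 then β * p ⟨(i : ℕ), hi⟩ a ⟨(j : ℕ), hj⟩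
          else if (j : ℕ) = M then β else 0
        else 1 - β)
    (c' : Fin (M + 2) → A → ℝ)
    (hc' : ∀ (i : Fin (M + 2)) (a : A),
      c' i a = if hi : (i : ℕ) < M + 1 then c ⟨(i : ℕ), hi⟩ a else 0)
    (g' : ℝ) (h' : Fin (M + 2) → ℝ)
    (hacoe : ∀ i : Fin (M + 2), h' i = ⨅ a : A, (c' i a - g' + ∑ j, p' i a j * h' j))
    (v : Fin (M + 1) → ℝ)
    (hv : ∀ j : Fin (M + 1), v j = h' j.castSucc - h' (Fin.last (M + 1)) + g' / (1 - β)) :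
    (∀ i : Fin (M + 1), v i = ⨅ a : A, (c i a + β * ∑ j, p i a j * v j))
    ∧ (∀ (i : Fin (M + 1)) (a : A),
        (c' i.castSucc a - g' + ∑ j, p' i.castSucc a j * h' j = h' i.castSucc)
          ↔ (c i a + β * ∑ j, p i a j * v j = v i))
    ∧ (∀ j : Fin (M + 1),
        v j = g' / (1 - β) - ∑ k ∈ Finset.Ioi j.castSucc, (h' k - h' (k - 1))) :=
  stmt16_general c p hsum β hβ1 p' hp' c' hc' g' h' hacoe v hv
end
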